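/- The Choi divergence is monotone under superchannels of the form Θ(N) = Σ_x p(x) Ω^x_{BE→D} ∘ N_{A→B} ∘ Λ^x_{C→AE} with each Λ^x unital: D^Φ(N‖M) ≥ D^Φ(Θ(N)‖Θ(M)), for any generalized divergence D (any function of pairs of states monotone under CPTP maps and satisfying D(ρ⊗ω‖σ⊗ω)=D(ρ‖σ)). -/

import Mathlib

open Matrix BigOperators
open scoped Kronecker ComplexOrder

namespace QCh

variable {n m : Type*} [Fintype n] [DecidableEq n] [Fintype m] [DecidableEq m]

/-- Density matrix: positive semidefinite with unit trace. -/
def IsDensity (ρ : Matrix n n ℂ) : Prop := ρ.PosSemidef ∧ ρ.trace = 1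

/-- Pure state: density matrix that is a projection. -/
def IsPure (ρ : Matrix n n ℂ) : Prop := IsDensity ρ ∧ ρ * ρ = ρ

/-- Apply a real function to a Hermitian matrix via its spectral decomposition. -/
noncomputable def matFun (f : ℝ → ℝ) (A : Matrix n n ℂ) : Matrix n n ℂ :=
  if h : A.IsHermitian then
    (h.eigenvectorUnitary : Matrix n n ℂ) * Matrix.diagonal (fun i => (f (h.eigenvalues i) : ℂ)) *
      (star h.eigenvectorUnitary : Matrix n n ℂ)
  else 0

/-- von Neumann entropy in bits. -/
noncomputable def vnEntropy (ρ : Matrix n n ℂ) : ℝ :=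
  if h : ρ.IsHermitian then -∑ i, h.eigenvalues i * Real.logb 2 (h.eigenvalues i) else 0

/-- Base-2 matrix logarithm (on the support, via spectral calculus). -/
noncomputable def matLog2 (A : Matrix n n ℂ) : Matrix n n ℂ := matFun (Real.logb 2) A

/-- Quantum relative entropy in bits. -/
noncomputable def relEnt (ρ σ : Matrix n n ℂ) : ℝ :=
  ((ρ * (matLog2 ρ - matLog2 σ)).trace).re

/-- Partial trace over the second tensor factor. -/
noncomputable def ptR {p : Type*} [Fintype p] (M : Matrix (n × p) (n × p) ℂ) : Matrix n n ℂ :=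
  Matrix.of fun i j => ∑ k, M (i, k) (j, k)

/-- Partial trace over the first tensor factor. -/
noncomputable def ptL {p : Type*} [Fintype p] (M : Matrix (p × n) (p × n) ℂ) : Matrix n n ℂ :=
  Matrix.of fun i j => ∑ k, M (k, i) (k, j)

/-- Conditional entropy H(B|R) of a state on R ⊗ B. -/
noncomputable def condEntB {R B : Type*} [Fintype R] [DecidableEq R] [Fintype B] [DecidableEq B]
    (ω : Matrix (R × B) (R × B) ℂ) : ℝ := vnEntropy ω - vnEntropy (ptR ω)

/-- Extension id_R ⊗ N of a map N on system A, acting on a state of R ⊗ A. -/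
noncomputable def ext {R A B : Type*} [Fintype R] [DecidableEq R] [Fintype A] [DecidableEq A]
    [Fintype B] [DecidableEq B] (N : Matrix A A ℂ → Matrix B B ℂ)
    (ψ : Matrix (R × A) (R × A) ℂ) : Matrix (R × B) (R × B) ℂ :=
  Matrix.of fun p q => N (Matrix.of fun a a' => ψ (p.1, a) (q.1, a')) p.2 q.2

/-- The channel with Kraus operators K. -/
noncomputable def krausMap {A B ι : Type*} [Fintype A] [Fintype B] [Fintype ι]
    (K : ι → Matrix B A ℂ) (X : Matrix A A ℂ) : Matrix B B ℂ :=
  ∑ i, K i * X * (K i)ᴴ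

/-- Entropy of a channel: infimum of H(B|R) of the output over pure bipartite inputs,
with the reference system isomorphic to the channel input. -/
noncomputable def chEnt {A B : Type*} [Fintype A] [DecidableEq A] [Fintype B] [DecidableEq B]
    (N : Matrix A A ℂ → Matrix B B ℂ) : ℝ :=
  sInf {x | ∃ ψ : Matrix (A × A) (A × A) ℂ, IsPure ψ ∧ x = condEntB (ext N ψ)}

/-- The normalized maximally entangled state Φ on A ⊗ A. -/
noncomputable def maxEnt (A : Type*) [Fintype A] [DecidableEq A] :
    Matrix (A × A) (A × A) ℂ :=
  ((Fintype.card A : ℂ))⁻¹ •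
    Matrix.of fun p q => if p.1 = p.2 ∧ q.1 = q.2 then 1 else 0

/-!
Write `J_N` for the Choi state of `N`. In each branch `x`, the transpose trick
`(1 ⊗ Λ)|Φ⟩ = (Λᵀ ⊗ 1)|Φ⟩` moves the pre-processing `Λˣ` onto the reference system, and
`Φ_{AE}` is `Φ_A ⊗ Φ_E` up to reordering the factors. Hence `J_{Θ(N)}` is the image of
`J_N ⊗ Φ_E` under the channel with Kraus operators `√p(x) ((Λˣ_k)ᵀ ⊗ Ωˣ_m)`, which does not
depend on `N` and is trace preserving precisely because each `Λˣ` is unital. Data processing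
for this channel and invariance of `D` under appending `Φ_E` give the inequality.
-/

open ComplexConjugate

lemma krausMap_comp {A B C ι κ : Type*} [Fintype A] [Fintype B] [Fintype C] [Fintype ι]
    [Fintype κ] (L : κ → Matrix C B ℂ) (K : ι → Matrix B A ℂ) (X : Matrix A A ℂ) :
    krausMap L (krausMap K X) = krausMap (fun t : κ × ι => L t.1 * K t.2) X := by
  simp only [krausMap, Matrix.mul_sum, Matrix.sum_mul, Fintype.sum_prod_type,
    Matrix.conjTranspose_mul, Matrix.mul_assoc]

lemma ext_krausMap {R A B ι : Type*} [Fintype R] [DecidableEq R] [Fintype A] [DecidableEq A]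
    [Fintype B] [DecidableEq B] [Fintype ι] (K : ι → Matrix B A ℂ)
    (ψ : Matrix (R × A) (R × A) ℂ) :
    ext (krausMap K) ψ = krausMap (fun i => (1 : Matrix R R ℂ) ⊗ₖ K i) ψ := by
  ext ⟨r, b⟩ ⟨r', b'⟩
  simp only [ext, krausMap, Matrix.of_apply, Matrix.sum_apply, Matrix.mul_apply,
    Matrix.conjTranspose_apply, Matrix.kroneckerMap_apply, Matrix.one_apply,
    Fintype.sum_prod_type]
  simp [ite_mul, mul_ite, apply_ite (starRingEnd ℂ), Finset.sum_mul, Finset.sum_ite_eq]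

lemma krausMap_submatrix_equiv {A C D ι : Type*} [Fintype A] [Fintype C] [Fintype D] [Fintype ι]
    (G : ι → Matrix D C ℂ) (e : A ≃ C) (Z : Matrix A A ℂ) :
    krausMap G (Z.submatrix e.symm e.symm) = krausMap (fun i => (G i).submatrix id e) Z := by
  simp only [krausMap, Matrix.conjTranspose_submatrix]
  refine Finset.sum_congr rfl fun i _ => ?_
  ext d d'
  simp only [Matrix.mul_apply, Matrix.submatrix_apply, id]
  rw [← e.sum_comp]
  simp only [Equiv.symm_apply_apply, Finset.sum_mul]
  refine Finset.sum_congr rfl fun a _ => ?_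
  rw [← e.sum_comp]
  simp

lemma sum_kronecker_sum {l m n p ι κ : Type*} [Fintype ι] [Fintype κ]
    (M : ι → Matrix l m ℂ) (N : κ → Matrix n p ℂ) :
    (∑ i, M i) ⊗ₖ (∑ k, N k) = ∑ i, ∑ k, M i ⊗ₖ N k := by
  ext
  simp [Matrix.sum_apply, Finset.sum_mul_sum]

lemma conjTranspose_submatrix_mul_submatrix {l m n : Type*} [Fintype n]
    (M : Matrix n m ℂ) (f : l ≃ m) :
    (M.submatrix id f)ᴴ * M.submatrix id f = (Mᴴ * M).submatrix f f := by
  rw [Matrix.conjTranspose_submatrix, Matrix.submatrix_mul _ _ _ _ _ Function.bijective_id]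

lemma mul_mul_conjTranspose_mul {l m n : Type*} [Fintype m] [Fintype n]
    (X : Matrix l m ℂ) (Y : Matrix m n ℂ) (Z : Matrix n n ℂ) :
    X * Y * Z * (X * Y)ᴴ = X * (Y * Z * Yᴴ) * Xᴴ := by
  simp only [Matrix.conjTranspose_mul, Matrix.mul_assoc]

lemma one_kronecker_mul {R l m n : Type*} [Fintype R] [DecidableEq R] [Fintype m]
    (M : Matrix l m ℂ) (N : Matrix m n ℂ) :
    (1 : Matrix R R ℂ) ⊗ₖ (M * N) = ((1 : Matrix R R ℂ) ⊗ₖ M) * ((1 : Matrix R R ℂ) ⊗ₖ N) := by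
  rw [← Matrix.mul_kronecker_mul, Matrix.one_mul]

def maxEntVec (C : Type*) [DecidableEq C] : Matrix (C × C) Unit ℂ :=
  Matrix.of fun p _ => if p.1 = p.2 then 1 else 0

lemma maxEnt_eq_smul_mul_conjTranspose (C : Type*) [Fintype C] [DecidableEq C] :
    maxEnt C = (Fintype.card C : ℂ)⁻¹ • (maxEntVec C * (maxEntVec C)ᴴ) := by
  ext ⟨a, b⟩ ⟨a', b'⟩
  simp [maxEnt, maxEntVec, Matrix.mul_apply, ite_and]
  split_ifs <;> simp

lemma maxEnt_isDensity (C : Type*) [Fintype C] [DecidableEq C] [Nonempty C] :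
    IsDensity (maxEnt C) := by
  rw [maxEnt_eq_smul_mul_conjTranspose]
  refine ⟨(Matrix.posSemidef_self_mul_conjTranspose _).smul (by positivity), ?_⟩
  rw [Matrix.trace_smul, Matrix.trace_mul_comm]
  simp [maxEntVec, Matrix.trace, Matrix.mul_apply, Fintype.sum_prod_type]

lemma mul_maxEnt_mul_conjTranspose {C l : Type*} [Fintype C] [DecidableEq C]
    (M : Matrix l (C × C) ℂ) :
    M * maxEnt C * Mᴴ =
      (Fintype.card C : ℂ)⁻¹ • ((M * maxEntVec C) * (M * maxEntVec C)ᴴ) := by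
  rw [maxEnt_eq_smul_mul_conjTranspose, Matrix.conjTranspose_mul]
  simp only [Matrix.mul_smul, Matrix.smul_mul, Matrix.mul_assoc]

lemma one_kronecker_mul_maxEntVec {C D : Type*} [Fintype C] [DecidableEq C] (M : Matrix D C ℂ) :
    ((1 : Matrix C C ℂ) ⊗ₖ M) * maxEntVec C = Matrix.of fun p _ => M p.2 p.1 := by
  ext ⟨c, d⟩ u
  simp [maxEntVec, Matrix.mul_apply, Matrix.one_apply, Fintype.sum_prod_type]

lemma transpose_kronecker_one_mul_maxEntVec {C D : Type*} [Fintype D] [DecidableEq D]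
    (M : Matrix D C ℂ) :
    (Mᵀ ⊗ₖ (1 : Matrix D D ℂ)) * maxEntVec D = Matrix.of fun p _ => M p.2 p.1 := by
  ext ⟨c, d⟩ u
  simp [maxEntVec, Matrix.mul_apply, Matrix.one_apply, Fintype.sum_prod_type]

lemma conj_one_kronecker_maxEnt {C : Type*} [Fintype C] [DecidableEq C] (Λ : Matrix C C ℂ) :
    ((1 : Matrix C C ℂ) ⊗ₖ Λ) * maxEnt C * ((1 : Matrix C C ℂ) ⊗ₖ Λ)ᴴ =
      (Λᵀ ⊗ₖ (1 : Matrix C C ℂ)) * maxEnt C * (Λᵀ ⊗ₖ (1 : Matrix C C ℂ))ᴴ := by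
  rw [mul_maxEnt_mul_conjTranspose, mul_maxEnt_mul_conjTranspose, one_kronecker_mul_maxEntVec,
    transpose_kronecker_one_mul_maxEntVec]

lemma ext_krausMap_maxEnt_apply {A B ι : Type*} [Fintype A] [DecidableEq A] [Fintype B]
    [DecidableEq B] [Fintype ι] (K : ι → Matrix B A ℂ) (a a' : A) (b b' : B) :
    ext (krausMap K) (maxEnt A) (a, b) (a', b') =
      (Fintype.card A : ℂ)⁻¹ * ∑ i, K i b a * conj (K i b' a') := by
  simp only [ext_krausMap, krausMap, mul_maxEnt_mul_conjTranspose, one_kronecker_mul_maxEntVec,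
    Matrix.smul_apply, Matrix.sum_apply, smul_eq_mul]
  simp [Matrix.mul_apply, Finset.mul_sum]

lemma ext_krausMap_kronecker_one_maxEnt {A B E ι : Type*} [Fintype A] [DecidableEq A]
    [Fintype B] [DecidableEq B] [Fintype E] [DecidableEq E] [Fintype ι] (K : ι → Matrix B A ℂ) :
    ext (krausMap fun i => K i ⊗ₖ (1 : Matrix E E ℂ)) (maxEnt (A × E)) =
      (ext (krausMap K) (maxEnt A) ⊗ₖ maxEnt E).submatrix
        (Equiv.prodProdProdComm A E B E) (Equiv.prodProdProdComm A E B E) := by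
  ext ⟨⟨a, e⟩, b, f⟩ ⟨⟨a', e'⟩, b', f'⟩
  simp only [Matrix.submatrix_apply, Equiv.prodProdProdComm_apply, Matrix.kroneckerMap_apply,
    ext_krausMap_maxEnt_apply]
  simp only [maxEnt, Matrix.smul_apply, Matrix.of_apply, Matrix.one_apply, Fintype.card_prod,
    smul_eq_mul]
  split_ifs <;> simp_all [Finset.mul_sum, mul_comm, mul_left_comm, mul_assoc]

lemma ext_krausMap_mul_maxEnt {B C ι κ : Type*} [Fintype B] [DecidableEq B] [Fintype C]
    [DecidableEq C] [Fintype ι] [Fintype κ] (K : ι → Matrix B C ℂ) (Λ : κ → Matrix C C ℂ) :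
    ext (krausMap fun t : ι × κ => K t.1 * Λ t.2) (maxEnt C) =
      krausMap (fun k => (Λ k)ᵀ ⊗ₖ (1 : Matrix B B ℂ)) (ext (krausMap K) (maxEnt C)) := by
  have hcomm : ∀ i k, (Λ k)ᵀ ⊗ₖ (1 : Matrix B B ℂ) * ((1 : Matrix C C ℂ) ⊗ₖ K i) =
      ((1 : Matrix C C ℂ) ⊗ₖ K i) * ((Λ k)ᵀ ⊗ₖ (1 : Matrix C C ℂ)) := fun i k => by
    simp only [← Matrix.mul_kronecker_mul, Matrix.mul_one, Matrix.one_mul]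
  rw [ext_krausMap, ext_krausMap, krausMap_comp]
  simp only [krausMap, Fintype.sum_prod_type]
  rw [Finset.sum_comm]
  refine Finset.sum_congr rfl fun k _ => Finset.sum_congr rfl fun i _ => ?_
  rw [one_kronecker_mul, hcomm, mul_mul_conjTranspose_mul, mul_mul_conjTranspose_mul,
    conj_one_kronecker_maxEnt]

section Mixture

variable {X τ m n : Type*} [Fintype X] [Fintype τ] [Fintype n]

noncomputable def mixKraus (p : X → ℝ) (G : X → τ → Matrix n m ℂ) (t : X × τ) : Matrix n m ℂ :=
  ((√(p t.1) : ℝ) : ℂ) • G t.1 t.2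

lemma krausMap_mixKraus [Fintype m] {p : X → ℝ} (hp : ∀ x, 0 ≤ p x) (G : X → τ → Matrix n m ℂ)
    (Z : Matrix m m ℂ) :
    krausMap (mixKraus p G) Z = ∑ x, (p x : ℂ) • krausMap (G x) Z := by
  simp only [krausMap, mixKraus, Fintype.sum_prod_type, Matrix.conjTranspose_smul,
    Matrix.smul_mul, Matrix.mul_smul, smul_smul, Finset.smul_sum, Complex.star_def,
    Complex.conj_ofReal, ← Complex.ofReal_mul, Real.mul_self_sqrt (hp _)]

lemma sum_conjTranspose_mixKraus_mul [DecidableEq m] {p : X → ℝ} (hp0 : ∀ x, 0 ≤ p x)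
    (hp1 : ∑ x, p x = 1)
    {G : X → τ → Matrix n m ℂ} (hG : ∀ x, ∑ s, (G x s)ᴴ * G x s = 1) :
    ∑ t, (mixKraus p G t)ᴴ * mixKraus p G t = 1 := by
  simp only [mixKraus, Fintype.sum_prod_type, Matrix.conjTranspose_smul,
    Matrix.smul_mul, Matrix.mul_smul, smul_smul, Complex.star_def, Complex.conj_ofReal,
    ← Complex.ofReal_mul, Real.mul_self_sqrt (hp0 _), ← Finset.smul_sum,
    hG, ← Finset.sum_smul, ← Complex.ofReal_sum, hp1, Complex.ofReal_one, one_smul]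

end Mixture

section Superchannel

variable {A B E D κ μ : Type*} [Fintype A] [DecidableEq A] [Fintype E] [DecidableEq E]
  [Fintype D] [Fintype κ] [Fintype μ]

def superchannelChoiKraus (Λ : κ → Matrix (A × E) (A × E) ℂ) (Ω : μ → Matrix D (B × E) ℂ)
    (t : μ × κ) : Matrix ((A × E) × D) ((A × B) × (E × E)) ℂ :=
  ((Λ t.2)ᵀ ⊗ₖ Ω t.1).submatrix id (Equiv.prodProdProdComm A B E E)

lemma ext_krausMap_superchannel [Fintype B] [DecidableEq B] [DecidableEq D] {ι : Type*}
    [Fintype ι] (K : ι → Matrix B A ℂ)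
    (Λ : κ → Matrix (A × E) (A × E) ℂ) (Ω : μ → Matrix D (B × E) ℂ) :
    ext (krausMap fun t : μ × ι × κ => Ω t.1 * (K t.2.1 ⊗ₖ (1 : Matrix E E ℂ)) * Λ t.2.2)
        (maxEnt (A × E)) =
      krausMap (superchannelChoiKraus Λ Ω) (ext (krausMap K) (maxEnt A) ⊗ₖ maxEnt E) := by
  have hmerge : ∀ t : μ × κ, ((1 : Matrix (A × E) (A × E) ℂ) ⊗ₖ Ω t.1) *
      ((Λ t.2)ᵀ ⊗ₖ (1 : Matrix (B × E) (B × E) ℂ)) = (Λ t.2)ᵀ ⊗ₖ Ω t.1 :=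
    fun t => by rw [← Matrix.mul_kronecker_mul, Matrix.one_mul, Matrix.mul_one]
  calc _ = krausMap (fun m => (1 : Matrix (A × E) (A × E) ℂ) ⊗ₖ Ω m)
        (ext (krausMap fun s : ι × κ => (K s.1 ⊗ₖ (1 : Matrix E E ℂ)) * Λ s.2)
          (maxEnt (A × E))) := by
        rw [ext_krausMap, ext_krausMap, krausMap_comp]
        simp only [Matrix.mul_assoc, one_kronecker_mul]
    _ = krausMap (fun m => (1 : Matrix (A × E) (A × E) ℂ) ⊗ₖ Ω m)
        (krausMap (fun k => (Λ k)ᵀ ⊗ₖ (1 : Matrix (B × E) (B × E) ℂ))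
          ((ext (krausMap K) (maxEnt A) ⊗ₖ maxEnt E).submatrix
            (Equiv.prodProdProdComm A E B E) (Equiv.prodProdProdComm A E B E))) := by
        rw [ext_krausMap_mul_maxEnt (fun i => K i ⊗ₖ (1 : Matrix E E ℂ)) Λ,
          ext_krausMap_kronecker_one_maxEnt]
    _ = _ := by
        unfold superchannelChoiKraus
        rw [krausMap_comp, ← Equiv.prodProdProdComm_symm, krausMap_submatrix_equiv]
        simp only [hmerge]

lemma sum_conjTranspose_superchannelChoiKraus_mul [DecidableEq B] {Λ : κ → Matrix (A × E) (A × E) ℂ}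
    (hΛ : ∑ k, Λ k * (Λ k)ᴴ = 1) {Ω : μ → Matrix D (B × E) ℂ} (hΩ : ∑ m, (Ω m)ᴴ * Ω m = 1) :
    ∑ t, (superchannelChoiKraus Λ Ω t)ᴴ * superchannelChoiKraus Λ Ω t = 1 := by
  have hΛt : ∑ k, ((Λ k)ᵀ)ᴴ * (Λ k)ᵀ = 1 := by
    rw [← Matrix.transpose_one, ← hΛ, Matrix.transpose_sum]
    simp only [Matrix.transpose_mul, Matrix.conjTranspose_transpose_eq_transpose_conjTranspose]
  have hsum : ∑ t : μ × κ, ((Λ t.2)ᵀ ⊗ₖ Ω t.1)ᴴ * ((Λ t.2)ᵀ ⊗ₖ Ω t.1) = 1 := by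
    simp only [Matrix.conjTranspose_kronecker, ← Matrix.mul_kronecker_mul, Fintype.sum_prod_type]
    rw [Finset.sum_comm, ← sum_kronecker_sum, hΛt, hΩ, Matrix.one_kronecker_one]
  simp only [superchannelChoiKraus, conjTranspose_submatrix_mul_submatrix]
  calc _ = (∑ t : μ × κ, ((Λ t.2)ᵀ ⊗ₖ Ω t.1)ᴴ * ((Λ t.2)ᵀ ⊗ₖ Ω t.1)).submatrix
        (Equiv.prodProdProdComm A B E E) (Equiv.prodProdProdComm A B E E) := by
        ext
        simp [Matrix.sum_apply]
    _ = 1 := by rw [hsum, Matrix.submatrix_one_equiv]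

end Superchannel

theorem choi_divergence_monotone_general
    {A B E Dy X ι ι' κ μ : Type}
    [Fintype A] [DecidableEq A] [Fintype B] [DecidableEq B]
    [Fintype E] [DecidableEq E] [Nonempty E] [Fintype Dy] [DecidableEq Dy]
    [Fintype X] [Fintype ι] [Fintype ι'] [Fintype κ] [Fintype μ]
    (Dg : ∀ (n : Type) [Fintype n] [DecidableEq n], Matrix n n ℂ → Matrix n n ℂ → ℝ)
    (hDP : ∀ (n m : Type) [Fintype n] [DecidableEq n] [Fintype m] [DecidableEq m]
      (τ : Type) [Fintype τ] (F : τ → Matrix m n ℂ), (∑ t, (F t)ᴴ * F t) = 1 →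
      ∀ ρ σ : Matrix n n ℂ,
        Dg m (∑ t, F t * ρ * (F t)ᴴ) (∑ t, F t * σ * (F t)ᴴ) ≤ Dg n ρ σ)
    (hTensor : ∀ (n m : Type) [Fintype n] [DecidableEq n] [Fintype m] [DecidableEq m]
      (ρ σ : Matrix n n ℂ) (ω : Matrix m m ℂ), IsDensity ω →
        Dg (n × m) (ρ ⊗ₖ ω) (σ ⊗ₖ ω) = Dg n ρ σ)
    (p : X → ℝ) (hp0 : ∀ x, 0 ≤ p x) (hp1 : ∑ x, p x = 1)
    (K : ι → Matrix B A ℂ)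
    (L : ι' → Matrix B A ℂ)
    (Λ : X → κ → Matrix (A × E) (A × E) ℂ)
    (hΛunital : ∀ x, ∑ k, Λ x k * (Λ x k)ᴴ = 1)
    (Ω : X → μ → Matrix Dy (B × E) ℂ)
    (hΩ : ∀ x, ∑ m, (Ω x m)ᴴ * Ω x m = 1) :
    Dg ((A × E) × Dy)
        (∑ x, ((p x : ℝ) : ℂ) •
          ext (krausMap (fun t : μ × ι × κ =>
            Ω x t.1 * (K t.2.1 ⊗ₖ (1 : Matrix E E ℂ)) * Λ x t.2.2)) (maxEnt (A × E)))
        (∑ x, ((p x : ℝ) : ℂ) •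
          ext (krausMap (fun t : μ × ι' × κ =>
            Ω x t.1 * (L t.2.1 ⊗ₖ (1 : Matrix E E ℂ)) * Λ x t.2.2)) (maxEnt (A × E))) ≤
      Dg (A × B) (ext (krausMap K) (maxEnt A)) (ext (krausMap L) (maxEnt A)) := by
  let F := mixKraus p fun x => superchannelChoiKraus (Λ x) (Ω x)
  calc _ = Dg ((A × E) × Dy) (krausMap F (ext (krausMap K) (maxEnt A) ⊗ₖ maxEnt E))
        (krausMap F (ext (krausMap L) (maxEnt A) ⊗ₖ maxEnt E)) := by
        simp only [F, krausMap_mixKraus hp0, ext_krausMap_superchannel]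
    _ ≤ Dg ((A × B) × (E × E)) (ext (krausMap K) (maxEnt A) ⊗ₖ maxEnt E)
        (ext (krausMap L) (maxEnt A) ⊗ₖ maxEnt E) :=
      hDP _ _ _ F (sum_conjTranspose_mixKraus_mul hp0 hp1 fun x =>
        sum_conjTranspose_superchannelChoiKraus_mul (hΛunital x) (hΩ x)) _ _
    _ = _ := hTensor _ _ _ _ _ (maxEnt_isDensity E)

/-- For any generalized divergence Dg (monotone under CPTP maps and
invariant under tensoring with a fixed state), the Choi divergence is monotone under
superchannels Θ(N) = Σ_x p(x) Ω^x ∘ (N ⊗ id_E) ∘ Λ^x with each pre-processing Λ^x a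
unital channel: Dg^Φ(Θ(N) ‖ Θ(M)) ≤ Dg^Φ(N ‖ M). -/
theorem choi_divergence_monotone
    {A B E Dy X ι ι' κ μ : Type}
    [Fintype A] [DecidableEq A] [Nonempty A] [Fintype B] [DecidableEq B]
    [Fintype E] [DecidableEq E] [Nonempty E] [Fintype Dy] [DecidableEq Dy]
    [Fintype X] [Fintype ι] [Fintype ι'] [Fintype κ] [Fintype μ]
    (Dg : ∀ (n : Type) [Fintype n] [DecidableEq n], Matrix n n ℂ → Matrix n n ℂ → ℝ)
    (hDP : ∀ (n m : Type) [Fintype n] [DecidableEq n] [Fintype m] [DecidableEq m]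
      (τ : Type) [Fintype τ] (F : τ → Matrix m n ℂ), (∑ t, (F t)ᴴ * F t) = 1 →
      ∀ ρ σ : Matrix n n ℂ,
        Dg m (∑ t, F t * ρ * (F t)ᴴ) (∑ t, F t * σ * (F t)ᴴ) ≤ Dg n ρ σ)
    (hTensor : ∀ (n m : Type) [Fintype n] [DecidableEq n] [Fintype m] [DecidableEq m]
      (ρ σ : Matrix n n ℂ) (ω : Matrix m m ℂ), IsDensity ω →
        Dg (n × m) (ρ ⊗ₖ ω) (σ ⊗ₖ ω) = Dg n ρ σ)
    (p : X → ℝ) (hp0 : ∀ x, 0 ≤ p x) (hp1 : ∑ x, p x = 1)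
    (K : ι → Matrix B A ℂ) (hK : ∑ i, (K i)ᴴ * K i = 1)
    (L : ι' → Matrix B A ℂ) (hL : ∑ i, (L i)ᴴ * L i = 1)
    (Λ : X → κ → Matrix (A × E) (A × E) ℂ)
    (hΛtp : ∀ x, ∑ k, (Λ x k)ᴴ * Λ x k = 1)
    (hΛunital : ∀ x, ∑ k, Λ x k * (Λ x k)ᴴ = 1)
    (Ω : X → μ → Matrix Dy (B × E) ℂ)
    (hΩ : ∀ x, ∑ m, (Ω x m)ᴴ * Ω x m = 1) :
    Dg ((A × E) × Dy)
        (∑ x, ((p x : ℝ) : ℂ) •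
          ext (krausMap (fun t : μ × ι × κ =>
            Ω x t.1 * (K t.2.1 ⊗ₖ (1 : Matrix E E ℂ)) * Λ x t.2.2)) (maxEnt (A × E)))
        (∑ x, ((p x : ℝ) : ℂ) •
          ext (krausMap (fun t : μ × ι' × κ =>
            Ω x t.1 * (L t.2.1 ⊗ₖ (1 : Matrix E E ℂ)) * Λ x t.2.2)) (maxEnt (A × E))) ≤
      Dg (A × B) (ext (krausMap K) (maxEnt A)) (ext (krausMap L) (maxEnt A)) :=
  choi_divergence_monotone_general Dg hDP hTensor p hp0 hp1 K L Λ hΛunital Ω hΩ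

end QCh
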